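/- For all n ≥ 0, all real x, y, q, and all nonzero reals a, b: H_n(x|a,q) = ∑_{j=0}^n [n choose j]_q P_j(x | y, a/b, q) (a/b)^{n-j} H_{n-j}(y|b,q), where H_n(·|a,q) are big q-Hermite polynomials and P_j are Al-Salam–Chihara polynomials. -/

import Mathlib

noncomputable def qint (q : ℝ) (n : ℕ) : ℝ := ∑ i ∈ Finset.range n, q ^ i

noncomputable def qfact (q : ℝ) (n : ℕ) : ℝ := ∏ i ∈ Finset.range n, qint q (i + 1)

noncomputable def qPoch (a q : ℝ) (n : ℕ) : ℝ := ∏ i ∈ Finset.range n, (1 - a * q ^ i)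

/-- Gaussian binomial coefficient as a polynomial in `q`, via the Pascal-type recurrence. -/
noncomputable def qbinom (q : ℝ) : ℕ → ℕ → ℝ
  | _, 0 => 1
  | 0, _ + 1 => 0
  | n + 1, k + 1 => qbinom q n k + q ^ (k + 1) * qbinom q n (k + 1)

/-- Rescaled continuous q-Hermite polynomials `H_n(x|q)`. -/
noncomputable def qHermite (q x : ℝ) : ℕ → ℝ
  | 0 => 1
  | 1 => x
  | n + 2 => x * qHermite q x (n + 1) - qint q (n + 1) * qHermite q x n

/-- Chebyshev polynomials of the second kind. -/
noncomputable def Ucheb (x : ℝ) : ℕ → ℝ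
  | 0 => 1
  | 1 => 2 * x
  | n + 2 => 2 * x * Ucheb x (n + 1) - Ucheb x n

/-- Probabilist's Hermite polynomials. -/
noncomputable def He (x : ℝ) : ℕ → ℝ
  | 0 => 1
  | 1 => x
  | n + 2 => x * He x (n + 1) - (n + 1 : ℝ) * He x n

/-- Big q-Hermite polynomials `H_n(x|a,q)`. -/
noncomputable def bigH (q a x : ℝ) (n : ℕ) : ℝ :=
  ∑ i ∈ Finset.range (n + 1),
    qbinom q n i * q ^ (i.choose 2) * (-a) ^ i * qHermite q x (n - i)

/-- Al-Salam--Chihara polynomials `P_n(x|y,ρ,q)`. -/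
noncomputable def ASC (q x y ρ : ℝ) : ℕ → ℝ
  | 0 => 1
  | 1 => x - ρ * y
  | n + 2 =>
      (x - ρ * y * q ^ (n + 1)) * ASC q x y ρ (n + 1)
        - qint q (n + 1) * (1 - ρ ^ 2 * q ^ n) * ASC q x y ρ n

/-- Auxiliary polynomials `B_n(x|q)`. -/
noncomputable def Bpoly (q x : ℝ) : ℕ → ℝ
  | 0 => 1
  | 1 => -x
  | n + 2 => -q ^ (n + 1) * x * Bpoly q x (n + 1) + q ^ n * qint q (n + 1) * Bpoly q x n

/-!
Both sides solve the recurrence `h (n + 1) = (x - a q^n) h n - [n]_q h (n - 1)` with `h 0 = 1`.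
The engine is a composition law for the q-binomial convolution
`(f ⋆ g) n = ∑_{i+j=n} [n choose i]_q f i g j`: if `f` solves
`f (n + 1) = (α - β q^n) f n - [n]_q (γ - δ q^(n-1)) f (n - 1)` and `g` solves it
with parameters `(β, β', δ, δ')`, then `f ⋆ g` solves it with parameters `(α, β', γ, δ')`.
Now `H(x|a,q) = H(x|q) ⋆ (q^(i choose 2) (-a)^i)` with factors of parameters `(x, 0, 1, 0)` and
`(0, a, 0, 0)`, while the right-hand side is `P(x|y,ρ,q) ⋆ (ρ^m H_m(y|b,q))`, `ρ = a / b`, with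
factors of parameters `(x, ρy, 1, ρ²)` and `(ρy, ρb, ρ², 0)`.
-/

open Finset

section QBinomial

variable (q : ℝ)

@[simp]
theorem qint_zero : qint q 0 = 0 := by simp [qint]

@[simp]
theorem qint_one : qint q 1 = 1 := by simp [qint]

theorem qint_succ (n : ℕ) : qint q (n + 1) = qint q n + q ^ n :=
  sum_range_succ _ _

@[simp]
theorem qbinom_zero_right (n : ℕ) : qbinom q n 0 = 1 := by
  cases n <;> rfl

theorem qbinom_succ_succ (n k : ℕ) :
    qbinom q (n + 1) (k + 1) = qbinom q n k + q ^ (k + 1) * qbinom q n (k + 1) := rfl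

theorem qbinom_of_lt {n k : ℕ} (h : n < k) : qbinom q n k = 0 := by
  induction n generalizing k with
  | zero => obtain ⟨k, rfl⟩ := Nat.exists_eq_add_one.mpr h; rfl
  | succ n ih =>
    obtain ⟨k, rfl⟩ := Nat.exists_eq_add_one.mpr (Nat.zero_lt_of_lt h)
    rw [qbinom_succ_succ, ih (by omega), ih (by omega), mul_zero, add_zero]

@[simp]
theorem qbinom_self (n : ℕ) : qbinom q n n = 1 := by
  induction n with
  | zero => rfl
  | succ n ih => rw [qbinom_succ_succ, ih, qbinom_of_lt q n.lt_succ_self, mul_zero, add_zero]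

theorem qbinom_succ_succ' (n k : ℕ) :
    qbinom q (n + 1) (k + 1) = q ^ (n - k) * qbinom q n k + qbinom q n (k + 1) := by
  induction n generalizing k with
  | zero => cases k <;> simp [qbinom_of_lt]
  | succ n ih =>
    rcases k with _ | k
    · have h := ih 0
      simp only [qbinom_succ_succ q (n + 1) 0, qbinom_succ_succ q n 0, qbinom_zero_right,
        Nat.sub_zero, zero_add, pow_one, mul_one] at h ⊢
      linear_combination q * h
    rcases lt_trichotomy k n with h | rfl | h
    · obtain ⟨m, rfl⟩ : ∃ m, n = k + m + 1 := ⟨n - k - 1, by omega⟩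
      have hk := ih k
      have hk' := ih (k + 1)
      rw [show k + m + 1 - k = m + 1 by omega] at hk
      rw [show k + m + 1 - (k + 1) = m by omega] at hk'
      rw [show k + m + 1 + 1 - (k + 1) = m + 1 by omega]
      linear_combination qbinom_succ_succ q (k + m + 1 + 1) (k + 1) + hk + q ^ (k + 2) * hk'
        - q ^ (m + 1) * qbinom_succ_succ q (k + m + 1) k - qbinom_succ_succ q (k + m + 1) (k + 1)
    · simp [qbinom_of_lt]
    · simp [qbinom_of_lt q (show n + 1 < k + 1 by omega),
        qbinom_of_lt q (show n + 1 < k + 1 + 1 by omega),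
        qbinom_of_lt q (show n + 1 + 1 < k + 1 + 1 by omega)]

theorem qbinom_add_symm (i j : ℕ) : qbinom q (i + j) i = qbinom q (i + j) j := by
  induction h : i + j generalizing i j with
  | zero =>
    obtain ⟨rfl, rfl⟩ : i = 0 ∧ j = 0 := by omega
    rfl
  | succ n ih =>
    rcases i with _ | i
    · simp [show j = n + 1 by omega]
    rcases j with _ | j
    · simp [show i = n by omega]
    rw [qbinom_succ_succ, qbinom_succ_succ', ih i (j + 1) (by omega),
      ← ih (i + 1) j (by omega), show n - j = i + 1 by omega]
    ring

theorem qint_mul_qbinom_succ_succ (n k : ℕ) :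
    qint q (k + 1) * qbinom q (n + 1) (k + 1) = qint q (n + 1) * qbinom q n k := by
  induction n generalizing k with
  | zero => cases k <;> simp [qbinom_of_lt]
  | succ n ih =>
    rcases k with _ | k
    · have h := ih 0
      simp only [qbinom_succ_succ' q (n + 1) 0, zero_add, qint_one, qbinom_zero_right,
        Nat.sub_zero, one_mul, mul_one] at h ⊢
      linear_combination h - qint_succ q (n + 1)
    rcases le_or_gt k n with h | h
    · obtain ⟨m, rfl⟩ : ∃ m, n = k + m := ⟨n - k, by omega⟩
      have hpascal := qbinom_succ_succ' q (k + m + 1) (k + 1)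
      have hpascal' := qbinom_succ_succ' q (k + m) k
      rw [show k + m + 1 - (k + 1) = m by omega] at hpascal
      rw [show k + m - k = m by omega] at hpascal'
      linear_combination qint q (k + 2) * hpascal + ih (k + 1)
        + q ^ m * qbinom q (k + m + 1) (k + 1) * qint_succ q (k + 1) + q ^ m * ih k
        - (qint q (k + m + 2) - q ^ (k + m + 1)) * hpascal'
        - (q ^ m * qbinom q (k + m) k + qbinom q (k + m) (k + 1)) * qint_succ q (k + m + 1)
    · simp [qbinom_of_lt q (show n + 1 < k + 1 by omega),
        qbinom_of_lt q (show n + 1 + 1 < k + 1 + 1 by omega)]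

theorem qint_mul_qbinom_add_succ (i j : ℕ) :
    qint q (j + 1) * qbinom q (i + j + 1) i = qint q (i + j + 1) * qbinom q (i + j) i := by
  calc qint q (j + 1) * qbinom q (i + j + 1) i
      = qint q (j + 1) * qbinom q (i + (j + 1)) (j + 1) := by rw [← qbinom_add_symm]; rfl
    _ = qint q (i + j + 1) * qbinom q (i + j) j := qint_mul_qbinom_succ_succ q (i + j) j
    _ = qint q (i + j + 1) * qbinom q (i + j) i := by rw [qbinom_add_symm]

end QBinomial

section Convolution

variable (q : ℝ)

noncomputable def qconv (f g : ℕ → ℝ) (n : ℕ) : ℝ :=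
  ∑ p ∈ antidiagonal n, qbinom q n p.1 * f p.1 * g p.2

variable {q}

theorem qconv_zero (f g : ℕ → ℝ) : qconv q f g 0 = f 0 * g 0 := by
  simp [qconv]

theorem qconv_eq_sum_range (f g : ℕ → ℝ) (n : ℕ) :
    qconv q f g n = ∑ j ∈ range (n + 1), qbinom q n j * f j * g (n - j) :=
  Nat.sum_antidiagonal_eq_sum_range_succ (fun i j => qbinom q n i * f i * g j) n

theorem qconv_comm (f g : ℕ → ℝ) : qconv q f g = qconv q g f := by
  funext n
  rw [qconv, ← Nat.sum_antidiagonal_swap]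
  refine sum_congr rfl fun p hp => ?_
  rw [Prod.fst_swap, Prod.snd_swap, ← mem_antidiagonal.1 hp, ← qbinom_add_symm]
  ring

theorem qconv_succ (f g : ℕ → ℝ) (n : ℕ) :
    qconv q f g (n + 1) =
      ∑ p ∈ antidiagonal n, qbinom q n p.1 * f (p.1 + 1) * g p.2
        + ∑ p ∈ antidiagonal n, q ^ p.1 * qbinom q n p.1 * f p.1 * g (p.2 + 1) := by
  have hshift : ∑ p ∈ antidiagonal (n + 1), q ^ p.1 * qbinom q n p.1 * f p.1 * g p.2
      = ∑ p ∈ antidiagonal n, q ^ p.1 * qbinom q n p.1 * f p.1 * g (p.2 + 1) := by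
    rw [Nat.sum_antidiagonal_succ', qbinom_of_lt q n.lt_succ_self]
    simp
  rw [qconv, Nat.sum_antidiagonal_succ, ← hshift, Nat.sum_antidiagonal_succ]
  simp only [qbinom_succ_succ, qbinom_zero_right, pow_zero, add_mul, sum_add_distrib]
  ring

theorem sum_antidiagonal_qbinom_mul_qint_fst (F : ℕ → ℕ → ℝ) (n : ℕ) :
    ∑ p ∈ antidiagonal n, qbinom q n p.1 * qint q p.1 * F (p.1 - 1) p.2
      = qint q n * ∑ p ∈ antidiagonal (n - 1), qbinom q (n - 1) p.1 * F p.1 p.2 := by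
  rcases n with _ | n
  · simp
  simp only [Nat.sum_antidiagonal_succ, Nat.add_sub_cancel, qint_zero, mul_zero, zero_mul,
    zero_add, mul_sum]
  refine sum_congr rfl fun p _ => ?_
  linear_combination F p.1 p.2 * qint_mul_qbinom_succ_succ q n p.1

theorem sum_antidiagonal_qbinom_mul_qint_snd (F : ℕ → ℕ → ℝ) (n : ℕ) :
    ∑ p ∈ antidiagonal n, qbinom q n p.1 * qint q p.2 * F p.1 (p.2 - 1)
      = qint q n * ∑ p ∈ antidiagonal (n - 1), qbinom q (n - 1) p.1 * F p.1 p.2 := by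
  rcases n with _ | n
  · simp
  simp only [Nat.sum_antidiagonal_succ', Nat.add_sub_cancel, qint_zero, mul_zero, zero_mul,
    zero_add, mul_sum]
  refine sum_congr rfl fun p hp => ?_
  rw [← mem_antidiagonal.1 hp]
  linear_combination F p.1 p.2 * qint_mul_qbinom_add_succ q p.1 p.2

end Convolution

/-- At `n = 0` the truncated `n - 1` is harmless, as the last term carries the factor
`qint q 0 = 0`. -/
def QRecurrence (q α β γ δ : ℝ) (f : ℕ → ℝ) : Prop :=
  ∀ n, f (n + 1) = (α - β * q ^ n) * f n - qint q n * (γ - δ * q ^ (n - 1)) * f (n - 1)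

namespace QRecurrence

variable {q α β γ δ : ℝ} {f g : ℕ → ℝ}

theorem eq_of_apply_zero (hf : QRecurrence q α β γ δ f) (hg : QRecurrence q α β γ δ g)
    (h0 : f 0 = g 0) : f = g := by
  funext n
  induction n using Nat.strong_induction_on with
  | _ n ih =>
    rcases n with _ | n
    · exact h0
    rw [hf, hg, ih n n.lt_succ_self, ih (n - 1) (by omega)]

theorem pow_mul (hf : QRecurrence q α β γ δ f) (ρ : ℝ) :
    QRecurrence q (ρ * α) (ρ * β) (ρ ^ 2 * γ) (ρ ^ 2 * δ) (fun n => ρ ^ n * f n) := by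
  rintro (_ | n)
  · simp only [hf 0, qint_zero]
    ring
  · simp only [hf (n + 1), Nat.add_sub_cancel]
    ring

theorem qconv {β' δ' : ℝ} (hf : QRecurrence q α β γ δ f)
    (hg : QRecurrence q β β' δ δ' g) : QRecurrence q α β' γ δ' (_root_.qconv q f g) := by
  intro n
  -- The `β`-terms cancel pointwise; once the factors `[i]_q`, `[j]_q` are absorbed into the
  -- q-binomials, so do the `δ`-terms.
  have hpointwise : ∀ p ∈ antidiagonal n,
      qbinom q n p.1 * f (p.1 + 1) * g p.2 + q ^ p.1 * qbinom q n p.1 * f p.1 * g (p.2 + 1)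
        = (α - β' * q ^ n) * (qbinom q n p.1 * f p.1 * g p.2)
          - qbinom q n p.1 * qint q p.1 * ((γ - δ * q ^ (p.1 - 1)) * f (p.1 - 1) * g p.2)
          - qbinom q n p.1 * qint q p.2
              * (q ^ p.1 * (δ - δ' * q ^ (p.2 - 1)) * f p.1 * g (p.2 - 1)) := by
    intro p hp
    rw [hf, hg, ← mem_antidiagonal.1 hp, pow_add]
    ring
  have hcollect :
      ∑ p ∈ antidiagonal (n - 1), qbinom q (n - 1) p.1 * ((γ - δ * q ^ p.1) * f p.1 * g p.2)
        + ∑ p ∈ antidiagonal (n - 1),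
            qbinom q (n - 1) p.1 * (q ^ p.1 * (δ - δ' * q ^ p.2) * f p.1 * g p.2)
      = (γ - δ' * q ^ (n - 1)) * _root_.qconv q f g (n - 1) := by
    rw [_root_.qconv, mul_sum, ← sum_add_distrib]
    refine sum_congr rfl fun p hp => ?_
    rw [← mem_antidiagonal.1 hp, pow_add]
    ring
  rw [qconv_succ, ← sum_add_distrib, sum_congr rfl hpointwise, sum_sub_distrib, sum_sub_distrib,
    ← mul_sum, sum_antidiagonal_qbinom_mul_qint_fst (fun i j => (γ - δ * q ^ i) * f i * g j),
    sum_antidiagonal_qbinom_mul_qint_snd (fun i j => q ^ i * (δ - δ' * q ^ j) * f i * g j)]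
  unfold _root_.qconv at hcollect ⊢
  linear_combination -qint q n * hcollect

end QRecurrence

theorem qHermite_qRecurrence (q x : ℝ) : QRecurrence q x 0 1 0 (qHermite q x) := by
  rintro (_ | n) <;> simp [qHermite]

theorem ASC_qRecurrence (q x y ρ : ℝ) : QRecurrence q x (ρ * y) 1 (ρ ^ 2) (ASC q x y ρ) := by
  rintro (_ | n) <;> simp [ASC]

theorem qRecurrence_pow_choose_two_mul_neg_pow (q a : ℝ) :
    QRecurrence q 0 a 0 0 (fun i => q ^ i.choose 2 * (-a) ^ i) := by
  intro n
  simp only [Nat.choose_succ_succ', Nat.choose_one_right]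
  ring

theorem bigH_eq_qconv (q a x : ℝ) :
    bigH q a x = qconv q (qHermite q x) (fun i => q ^ i.choose 2 * (-a) ^ i) := by
  funext n
  rw [qconv_comm, qconv_eq_sum_range, bigH]
  simp only [mul_assoc]

theorem bigH_qRecurrence (q a x : ℝ) : QRecurrence q x a 1 0 (bigH q a x) := by
  rw [bigH_eq_qconv]
  exact (qHermite_qRecurrence q x).qconv (qRecurrence_pow_choose_two_mul_neg_pow q a)

theorem bigH_eq_sum_ASC_bigH_general (q x y a b : ℝ) (hb : b ≠ 0) (n : ℕ) :
    bigH q a x n =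
      ∑ j ∈ Finset.range (n + 1),
        qbinom q n j * ASC q x y (a / b) j * (a / b) ^ (n - j) * bigH q b y (n - j) := by
  have hscaled := (bigH_qRecurrence q b y).pow_mul (a / b)
  rw [mul_one, mul_zero, div_mul_cancel₀ a hb] at hscaled
  have hconv := (ASC_qRecurrence q x y (a / b)).qconv hscaled
  rw [(bigH_qRecurrence q a x).eq_of_apply_zero hconv (by simp [qconv_zero, bigH, qHermite, ASC]),
    qconv_eq_sum_range]
  simp only [mul_assoc]

theorem bigH_eq_sum_ASC_bigH (q x y a b : ℝ) (ha : a ≠ 0) (hb : b ≠ 0) (n : ℕ) :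
    bigH q a x n =
      ∑ j ∈ Finset.range (n + 1),
        qbinom q n j * ASC q x y (a / b) j * (a / b) ^ (n - j) * bigH q b y (n - j) :=
  bigH_eq_sum_ASC_bigH_general q x y a b hb n
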